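/- For all m, n ≥ 1, a subset E of {0,…,m−1}×{0,…,n−1} is reachable if and only if there exist an integer k with k ≤ f(m,n) = 2^(mn−1) + 2^((m−1)(n−1))·(2^(m−1)−1)·(2^(n−1)−1) and a pair (Λ,P) ∈ U_{m,n}^(k) such that s(Λ,P) = E. -/

import Mathlib

open Finset

/-- `Π·h`: the vector whose `q`-th entry is the union of the `Π p` over all `p` with `h p = q`. -/
def dotAct {n : ℕ} (Pi : Fin n → Finset ℕ) (h : Fin n → Fin n) : Fin n → Finset ℕ :=
  fun q => (Finset.univ.filter (fun p => h p = q)).biUnion Pi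

/-- Entrywise union of two vectors of sets. -/
def vUnion {n : ℕ} (Pi Pi' : Fin n → Finset ℕ) : Fin n → Finset ℕ :=
  fun q => Pi q ∪ Pi' q

/-- `r = max (π₀ ∪ … ∪ π_{n−1})`. -/
def vMax {n : ℕ} (Pi : Fin n → Finset ℕ) : ℕ :=
  (Finset.univ.sup Pi).sup id

/-- `Π↑`: add `r = max (π₀ ∪ … ∪ π_{n−1})` to every element of every entry. -/
def vUp {n : ℕ} (Pi : Fin n → Finset ℕ) : Fin n → Finset ℕ :=
  fun q => (Pi q).image (· + vMax Pi)

/-- A `k`-EXPcomposition of size `n`: pairwise disjoint entries whose union is `{1,…,2^k}`. -/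
def IsEXP {n : ℕ} (k : ℕ) (Pi : Fin n → Finset ℕ) : Prop :=
  (∀ p q : Fin n, p ≠ q → Disjoint (Pi p) (Pi q)) ∧
    Finset.univ.sup Pi = Finset.Icc 1 (2 ^ k)

/-- A `k`-Rvalid vector of size `n`. -/
def IsRvalid {n : ℕ} (k : ℕ) (ρ : Fin n → Finset ℕ) : Prop :=
  IsEXP k ρ ∧ (∀ p : Fin n, p.val = 0 → 1 ∈ ρ p) ∧
    ∀ k' < k, ∀ i ∈ Finset.Icc 1 (2 ^ k'), ∀ j ∈ Finset.Icc 1 (2 ^ k'),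
      (∃ α, i ∈ ρ α ∧ j ∈ ρ α) → ∃ β, i + 2 ^ k' ∈ ρ β ∧ j + 2 ^ k' ∈ ρ β

/-- A `k`-Lvalid vector of size `m`. -/
def IsLvalid {m : ℕ} (k : ℕ) (lam : Fin m → Finset ℕ) : Prop :=
  IsEXP k lam ∧ (∀ p : Fin m, p.val = 0 → 2 ^ k ∈ lam p) ∧
    ∀ k' < k, ∀ i ∈ Finset.Icc 1 (2 ^ k'), ∀ j ∈ Finset.Icc 1 (2 ^ k'),
      (∃ α, 2 ^ k + 1 - i ∈ lam α ∧ 2 ^ k + 1 - j ∈ lam α) →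
        ∃ β, 2 ^ k + 1 - (i + 2 ^ k') ∈ lam β ∧ 2 ^ k + 1 - (j + 2 ^ k') ∈ lam β

/-- Number of nonempty entries of a vector of sets. -/
def nne {n : ℕ} (Pi : Fin n → Finset ℕ) : ℕ :=
  (Finset.univ.filter (fun q => Pi q ≠ ∅)).card

/-- `succ(P) = {P ∪ (P·g)↑ : g}`. -/
def succSet {n : ℕ} (P : Fin n → Finset ℕ) : Finset (Fin n → Finset ℕ) :=
  (Finset.univ : Finset (Fin n → Fin n)).image (fun g => vUnion P (vUp (dotAct P g)))

/-- The graded set `U_{m,n}^{(k)}` of U-pairs. -/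
def Uset (m n : ℕ) : ℕ → Set ((Fin m → Finset ℕ) × (Fin n → Finset ℕ))
  | 0 => {x | x = (fun p => if p.val = 0 then {1} else ∅,
                   fun q => if q.val = 0 then {1} else ∅)}
  | k + 1 => {x | ∃ L P, (L, P) ∈ Uset m n k ∧ ∃ (f : Fin m → Fin m) (g : Fin n → Fin n),
      x = (vUnion (dotAct L f) (vUp L), vUnion P (vUp (dotAct P g)))}

/-- The `r`-Stirling number: partitions of `{1,…,a}` into `b` nonempty blocks
with `1,…,r` in pairwise distinct blocks. -/
noncomputable def rStirling (a b r : ℕ) : ℕ :=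
  Set.ncard {C : Finset (Finset ℕ) |
    C.card = b ∧ (∅ ∉ C) ∧
    (∀ B ∈ C, ∀ B' ∈ C, B ≠ B' → Disjoint B B') ∧
    C.sup id = Finset.Icc 1 a ∧
    ∀ x ∈ Finset.Icc 1 r, ∀ y ∈ Finset.Icc 1 r, x ≠ y →
      ∀ B ∈ C, x ∈ B → y ∉ B}

/-- The Stirling number of the second kind: the number of partitions of an
`a`-element set into `b` nonempty blocks. -/
noncomputable def stirling2 (a b : ℕ) : ℕ := rStirling a b 0

/-- The entry `s_n^{(i,j)}` (with `1 ≤ i,j ≤ n`). -/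
noncomputable def sEntry (n i j : ℕ) : ℕ :=
  if i ≤ j then
    (j - i).factorial * Nat.choose (n - i) (j - i) *
      ∑ α ∈ Finset.Icc (j - i) i, Nat.choose i α * i ^ (i - α) * stirling2 α (j - i)
  else 0

/-- The matrix `S_n`, with rows and columns indexed by `{1,…,n}`. -/
noncomputable def Smat (n : ℕ) : Matrix (Fin n) (Fin n) ℕ :=
  fun i j => sEntry n (i.val + 1) (j.val + 1)

/-- One step of the shuffle-automaton action on subsets of the grid. -/
def stepE {m n : ℕ} (E : Finset (Fin m × Fin n)) (f : Fin m → Fin m) (g : Fin n → Fin n) :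
    Finset (Fin m × Fin n) :=
  E.image (fun p => (f p.1, p.2)) ∪ E.image (fun p => (p.1, g p.2))

/-- Reachability from `{(0,0)}` by finitely many steps. -/
def Reach {m n : ℕ} (hm : 0 < m) (hn : 0 < n) (E : Finset (Fin m × Fin n)) : Prop :=
  Relation.ReflTransGen (fun E1 E2 => ∃ f g, E2 = stepE E1 f g)
    {(⟨0, hm⟩, ⟨0, hn⟩)} E

/-- Reachability from `{(0,0)}` in at most `t` steps. -/
def ReachIn {m n : ℕ} (hm : 0 < m) (hn : 0 < n) :
    ℕ → Finset (Fin m × Fin n) → Prop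
  | 0, E => E = {(⟨0, hm⟩, ⟨0, hn⟩)}
  | t + 1, E => ReachIn hm hn t E ∨
      ∃ E' f g, ReachIn hm hn t E' ∧ E = stepE E' f g

/-- `s(Λ,P) = {(i,j) : λ_i ∩ ρ_j ≠ ∅}`. -/
def sTab {m n : ℕ} (L : Fin m → Finset ℕ) (P : Fin n → Finset ℕ) :
    Finset (Fin m × Fin n) :=
  Finset.univ.filter (fun p => (L p.1 ∩ P p.2).Nonempty)

/-
Each pair in `U_{m,n}^(k)` has both vectors covering exactly `{1,…,2^k}`, so in the successor
`((Λ·f) ∪ Λ↑, P ∪ (P·g)↑)` the old entries stay in `{1,…,2^k}` and the shifted ones lie above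
`2^k`; hence its `s` is `step(s(Λ,P), f, g)`. As `step(E, id, id) = E`, the sets `s(U^(k))` are
exactly the sets reachable in at most `k` steps. These form an increasing chain inside the family of
subsets meeting both row `0` and column `0`, which has exactly `f(m,n)` members, so the chain is
stationary from `k = f(m,n)` on.
-/

theorem Finset.iterate_subset_iterate_of_card_le {α : Type*} {Φ : Finset α → Finset α}
    (hΦ : id ≤ Φ) (X : Finset α) {N : ℕ} (hN : ∀ t, #(Φ^[t] X) ≤ N) (t : ℕ) :
    Φ^[t] X ⊆ Φ^[N] X := by
  have mono := Function.monotone_iterate_of_id_le hΦ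
  obtain ⟨s, hsN, hs⟩ : ∃ s ≤ N, Φ (Φ^[s] X) = Φ^[s] X := by
    by_contra! hgrow
    have card_ge : ∀ s ≤ N + 1, s ≤ #(Φ^[s] X) := by
      intro s hs
      induction s with
      | zero => exact Nat.zero_le _
      | succ s ih =>
        have hlt : Φ^[s] X ⊂ Φ^[s + 1] X := by
          rw [Function.iterate_succ_apply']
          exact (hΦ _).ssubset_of_ne (hgrow s (by omega)).symm
        exact (ih (by omega)).trans_lt (card_lt_card hlt)
    exact absurd (hN (N + 1)) (by have := card_ge (N + 1) le_rfl; omega)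
  rcases le_total t s with hts | hst
  · exact (mono hts X).trans (mono hsN X)
  · obtain ⟨u, rfl⟩ := Nat.exists_eq_add_of_le hst
    rw [add_comm, Function.iterate_add_apply, Function.iterate_fixed hs]
    exact mono hsN X

theorem Finset.card_filter_exists_fst_and_exists_snd {α β : Type*} [Fintype α] [Fintype β]
    [DecidableEq α] [DecidableEq β] (a : α) (b : β) :
    #{E : Finset (α × β) | (∃ y, (a, y) ∈ E) ∧ ∃ x, (x, b) ∈ E} +
        2 ^ ((Fintype.card α - 1) * Fintype.card β) +
        2 ^ (Fintype.card α * (Fintype.card β - 1)) =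
      2 ^ (Fintype.card α * Fintype.card β) +
        2 ^ ((Fintype.card α - 1) * (Fintype.card β - 1)) := by
  set R : Finset (α × β) := ({a}ᶜ : Finset α) ×ˢ univ
  set C : Finset (α × β) := univ ×ˢ ({b}ᶜ : Finset β)
  have avoids_row (E : Finset (α × β)) : (∃ y, (a, y) ∈ E) ↔ ¬ E ⊆ R := by
    simp only [R, subset_iff, mem_product, mem_compl, mem_singleton, mem_univ, and_true]
    grind
  have avoids_col (E : Finset (α × β)) : (∃ x, (x, b) ∈ E) ↔ ¬ E ⊆ C := by
    simp only [C, subset_iff, mem_product, mem_compl, mem_singleton, mem_univ, true_and]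
    grind
  have hfilter : ({E : Finset (α × β) | (∃ y, (a, y) ∈ E) ∧ ∃ x, (x, b) ∈ E} : Finset _) =
      univ \ (R.powerset ∪ C.powerset) := by
    ext E
    simp only [mem_filter, mem_univ, true_and, mem_sdiff, mem_union, mem_powerset,
      avoids_row, avoids_col]
    tauto
  have hinter : R.powerset ∩ C.powerset = (R ∩ C).powerset := by
    ext E
    simp only [mem_inter, mem_powerset, subset_inter_iff]
  have hR : #R = (Fintype.card α - 1) * Fintype.card β := by
    simp only [R, card_product, card_compl, card_singleton, card_univ]
  have hC : #C = Fintype.card α * (Fintype.card β - 1) := by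
    simp only [C, card_product, card_compl, card_singleton, card_univ]
  have hRC : #(R ∩ C) = (Fintype.card α - 1) * (Fintype.card β - 1) := by
    simp only [R, C, product_inter_product, inter_univ, univ_inter, card_product, card_compl,
      card_singleton]
  have hunion := card_union_add_card_inter R.powerset C.powerset
  have hcomp := card_sdiff_add_card_eq_card (subset_univ (R.powerset ∪ C.powerset))
  rw [hinter, card_powerset, card_powerset, card_powerset, hR, hC, hRC] at hunion
  rw [card_univ, Fintype.card_finset, Fintype.card_prod] at hcomp
  rw [hfilter]
  omega

theorem two_pow_grid_identity {m n : ℕ} (hm : 0 < m) (hn : 0 < n) :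
    (2 ^ (m * n - 1) + 2 ^ ((m - 1) * (n - 1)) * (2 ^ (m - 1) - 1) * (2 ^ (n - 1) - 1)) +
        2 ^ ((m - 1) * n) + 2 ^ (m * (n - 1)) =
      2 ^ (m * n) + 2 ^ ((m - 1) * (n - 1)) := by
  obtain ⟨a, rfl⟩ : ∃ a, m = a + 1 := ⟨m - 1, by omega⟩
  obtain ⟨b, rfl⟩ : ∃ b, n = b + 1 := ⟨n - 1, by omega⟩
  obtain ⟨x, hx⟩ : ∃ x, 2 ^ a = x + 1 := ⟨2 ^ a - 1, by have := Nat.one_le_two_pow (n := a); omega⟩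
  obtain ⟨y, hy⟩ : ∃ y, 2 ^ b = y + 1 := ⟨2 ^ b - 1, by have := Nat.one_le_two_pow (n := b); omega⟩
  have hexp : (a + 1) * (b + 1) = a * b + a + b + 1 := by ring
  rw [hexp, Nat.add_sub_cancel, Nat.add_sub_cancel, Nat.add_sub_cancel]
  simp only [add_mul, mul_add, one_mul, mul_one, pow_add, hx, hy, Nat.add_sub_cancel]
  ring

section Vectors

variable {n : ℕ}

@[simp]
theorem mem_dotAct {A : Fin n → Finset ℕ} {h : Fin n → Fin n} {q : Fin n} {x : ℕ} :
    x ∈ dotAct A h q ↔ ∃ p, h p = q ∧ x ∈ A p := by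
  simp [dotAct]

theorem sup_dotAct (A : Fin n → Finset ℕ) (h : Fin n → Fin n) :
    univ.sup (dotAct A h) = univ.sup A := by
  ext x
  simp only [mem_sup, mem_univ, true_and, mem_dotAct]
  exact ⟨fun ⟨_, p, _, hx⟩ => ⟨p, hx⟩, fun ⟨p, hx⟩ => ⟨h p, p, rfl, hx⟩⟩

theorem sup_vUnion (A B : Fin n → Finset ℕ) :
    univ.sup (vUnion A B) = univ.sup A ∪ univ.sup B :=
  Finset.sup_sup

theorem sup_vUp (A : Fin n → Finset ℕ) :
    univ.sup (vUp A) = (univ.sup A).image (· + vMax A) := by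
  ext x
  simp only [vUp, mem_sup, mem_univ, true_and, mem_image]
  grind

theorem vMax_eq_of_sup_eq_Icc {A : Fin n → Finset ℕ} {r : ℕ} (h : univ.sup A = Icc 1 r) :
    vMax A = r := by
  rw [vMax, h]
  rcases Nat.eq_zero_or_pos r with rfl | hr
  · rfl
  · exact le_antisymm (Finset.sup_le fun x hx => (mem_Icc.1 hx).2)
      (le_sup (f := id) (mem_Icc.2 ⟨hr, le_rfl⟩))

theorem Icc_union_image_add_self (r : ℕ) :
    Icc 1 r ∪ (Icc 1 r).image (· + r) = Icc 1 (2 * r) := by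
  ext x
  simp only [mem_union, mem_image, mem_Icc]
  constructor
  · rintro (h | ⟨y, hy, rfl⟩) <;> omega
  · intro hx
    by_cases hxr : x ≤ r
    · exact Or.inl ⟨hx.1, hxr⟩
    · exact Or.inr ⟨x - r, by omega, by omega⟩

end Vectors

def startVec (n : ℕ) : Fin n → Finset ℕ := fun q => if q.val = 0 then {1} else ∅

theorem sup_startVec {n : ℕ} (hn : 0 < n) : univ.sup (startVec n) = Icc 1 1 := by
  ext x
  simp only [startVec, mem_sup, mem_univ, true_and, mem_Icc]
  constructor
  · rintro ⟨q, hq⟩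
    split_ifs at hq <;> simp_all
  · intro hx
    exact ⟨⟨0, hn⟩, by simp; omega⟩

theorem Uset_zero (m n : ℕ) : Uset m n 0 = {(startVec m, startVec n)} := rfl

theorem sup_of_mem_Uset {m n k : ℕ} (hm : 0 < m) (hn : 0 < n) {L : Fin m → Finset ℕ}
    {P : Fin n → Finset ℕ} (h : (L, P) ∈ Uset m n k) :
    univ.sup L = Icc 1 (2 ^ k) ∧ univ.sup P = Icc 1 (2 ^ k) := by
  induction k generalizing L P with
  | zero =>
    obtain ⟨rfl, rfl⟩ := Prod.mk.inj h
    exact ⟨sup_startVec hm, sup_startVec hn⟩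
  | succ k ih =>
    obtain ⟨L, P, hLP, f, g, heq⟩ := h
    obtain ⟨rfl, rfl⟩ := Prod.mk.inj heq
    obtain ⟨hL, hP⟩ := ih hLP
    constructor
    · rw [sup_vUnion, sup_vUp, sup_dotAct, hL, vMax_eq_of_sup_eq_Icc hL,
        Icc_union_image_add_self, pow_succ']
    · rw [sup_vUnion, sup_vUp, vMax_eq_of_sup_eq_Icc ((sup_dotAct P g).trans hP), sup_dotAct, hP,
        Icc_union_image_add_self, pow_succ']

theorem inter_union_image_add_nonempty_iff {A B C D : Finset ℕ} {r : ℕ}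
    (hA : ∀ x ∈ A, x ≤ r) (hB : ∀ x ∈ B, 0 < x) (hC : ∀ x ∈ C, x ≤ r) (hD : ∀ x ∈ D, 0 < x) :
    ((A ∪ B.image (· + r)) ∩ (C ∪ D.image (· + r))).Nonempty ↔
      (A ∩ C).Nonempty ∨ (B ∩ D).Nonempty := by
  constructor
  · rintro ⟨x, hx⟩
    simp only [mem_inter, mem_union, mem_image] at hx
    rcases hx with ⟨hxA | ⟨y, hy, rfl⟩, hxC | ⟨z, hz, hzx⟩⟩
    · exact Or.inl ⟨x, mem_inter.2 ⟨hxA, hxC⟩⟩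
    · exact absurd (hA x hxA) (by have := hD z hz; omega)
    · exact absurd (hC _ hxC) (by have := hB y hy; omega)
    · obtain rfl : z = y := by omega
      exact Or.inr ⟨z, mem_inter.2 ⟨hy, hz⟩⟩
  · rintro (⟨x, hx⟩ | ⟨x, hx⟩)
    · exact ⟨x, by simp_all⟩
    · exact ⟨x + r, by simp_all⟩

theorem sTab_vUnion_vUp {m n r : ℕ} {L : Fin m → Finset ℕ} {P : Fin n → Finset ℕ}
    (hL : univ.sup L = Icc 1 r) (hP : univ.sup P = Icc 1 r)
    (f : Fin m → Fin m) (g : Fin n → Fin n) :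
    sTab (vUnion (dotAct L f) (vUp L)) (vUnion P (vUp (dotAct P g))) = stepE (sTab L P) f g := by
  have memL : ∀ i, ∀ x ∈ L i, 1 ≤ x ∧ x ≤ r := fun i x hx =>
    mem_Icc.1 (hL ▸ mem_sup.2 ⟨i, mem_univ i, hx⟩)
  have memP : ∀ j, ∀ x ∈ P j, 1 ≤ x ∧ x ≤ r := fun j x hx =>
    mem_Icc.1 (hP ▸ mem_sup.2 ⟨j, mem_univ j, hx⟩)
  have hvL : vMax L = r := vMax_eq_of_sup_eq_Icc hL
  have hvP : vMax (dotAct P g) = r := vMax_eq_of_sup_eq_Icc ((sup_dotAct P g).trans hP)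
  ext ⟨i, j⟩
  simp only [sTab, mem_filter, mem_univ, true_and, vUnion, vUp, hvL, hvP]
  rw [inter_union_image_add_nonempty_iff]
  · simp only [stepE, mem_union, mem_image, Finset.Nonempty, mem_inter, mem_dotAct,
      mem_filter, mem_univ, true_and, Prod.exists, Prod.mk.injEq]
    grind
  · simp only [mem_dotAct]
    grind
  · grind
  · grind
  · simp only [mem_dotAct]
    grind

section Reachability

variable {m n : ℕ}

def stepImage (X : Finset (Finset (Fin m × Fin n))) : Finset (Finset (Fin m × Fin n)) :=
  X.biUnion fun E => univ.image fun fg : (Fin m → Fin m) × (Fin n → Fin n) => stepE E fg.1 fg.2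

theorem mem_stepImage {X : Finset (Finset (Fin m × Fin n))} {E' : Finset (Fin m × Fin n)} :
    E' ∈ stepImage X ↔ ∃ E ∈ X, ∃ f g, stepE E f g = E' := by
  simp [stepImage]

theorem stepE_id_id (E : Finset (Fin m × Fin n)) : stepE E id id = E := by
  simp [stepE]

theorem subset_stepImage (X : Finset (Finset (Fin m × Fin n))) : X ⊆ stepImage X :=
  fun E hE => mem_stepImage.2 ⟨E, hE, id, id, stepE_id_id E⟩

def reachSet (hm : 0 < m) (hn : 0 < n) (k : ℕ) : Finset (Finset (Fin m × Fin n)) :=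
  stepImage^[k] {{(⟨0, hm⟩, ⟨0, hn⟩)}}

theorem reachSet_zero (hm : 0 < m) (hn : 0 < n) : reachSet hm hn 0 = {{(⟨0, hm⟩, ⟨0, hn⟩)}} := rfl

theorem reachSet_succ (hm : 0 < m) (hn : 0 < n) (k : ℕ) :
    reachSet hm hn (k + 1) = stepImage (reachSet hm hn k) :=
  Function.iterate_succ_apply' _ _ _

theorem reach_iff_exists_mem_reachSet (hm : 0 < m) (hn : 0 < n)
    (E : Finset (Fin m × Fin n)) :
    Reach hm hn E ↔ ∃ k, E ∈ reachSet hm hn k := by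
  constructor
  · intro h
    induction h with
    | refl => exact ⟨0, mem_singleton_self _⟩
    | tail _ hstep ih =>
      obtain ⟨k, hk⟩ := ih
      obtain ⟨f, g, rfl⟩ := hstep
      refine ⟨k + 1, ?_⟩
      rw [reachSet_succ]
      exact mem_stepImage.2 ⟨_, hk, f, g, rfl⟩
  · rintro ⟨k, hk⟩
    induction k generalizing E with
    | zero =>
      rw [mem_singleton.1 hk]
      exact Relation.ReflTransGen.refl
    | succ k ih =>
      rw [reachSet_succ, mem_stepImage] at hk
      obtain ⟨E, hE, f, g, rfl⟩ := hk
      exact (ih E hE).tail ⟨f, g, rfl⟩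

theorem sTab_startVec (hm : 0 < m) (hn : 0 < n) :
    sTab (startVec m) (startVec n) = {(⟨0, hm⟩, ⟨0, hn⟩)} := by
  ext ⟨i, j⟩
  rw [sTab, mem_filter]
  simp only [startVec, mem_univ, true_and, mem_singleton, Prod.mk.injEq, Fin.ext_iff]
  split_ifs <;> simp_all

theorem mem_reachSet_iff (hm : 0 < m) (hn : 0 < n) (k : ℕ) (E : Finset (Fin m × Fin n)) :
    E ∈ reachSet hm hn k ↔
      ∃ (L : Fin m → Finset ℕ) (P : Fin n → Finset ℕ), (L, P) ∈ Uset m n k ∧ sTab L P = E := by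
  induction k generalizing E with
  | zero => simp [reachSet_zero, Uset_zero, sTab_startVec hm hn, eq_comm]
  | succ k ih =>
    rw [reachSet_succ, mem_stepImage]
    constructor
    · rintro ⟨E, hE, f, g, rfl⟩
      obtain ⟨L, P, hLP, rfl⟩ := (ih E).1 hE
      obtain ⟨hL, hP⟩ := sup_of_mem_Uset hm hn hLP
      exact ⟨_, _, ⟨L, P, hLP, f, g, rfl⟩, sTab_vUnion_vUp hL hP f g⟩
    · rintro ⟨_, _, ⟨L, P, hLP, f, g, heq⟩, rfl⟩
      obtain ⟨rfl, rfl⟩ := Prod.mk.inj heq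
      obtain ⟨hL, hP⟩ := sup_of_mem_Uset hm hn hLP
      exact ⟨sTab L P, (ih _).2 ⟨L, P, hLP, rfl⟩, f, g, (sTab_vUnion_vUp hL hP f g).symm⟩

theorem stepE_meets_row {E : Finset (Fin m × Fin n)} {i : Fin m} (h : ∃ j, (i, j) ∈ E)
    (f : Fin m → Fin m) (g : Fin n → Fin n) : ∃ j, (i, j) ∈ stepE E f g := by
  obtain ⟨j, hj⟩ := h
  exact ⟨g j, mem_union_right _ (mem_image_of_mem _ hj)⟩

theorem stepE_meets_col {E : Finset (Fin m × Fin n)} {j : Fin n} (h : ∃ i, (i, j) ∈ E)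
    (f : Fin m → Fin m) (g : Fin n → Fin n) : ∃ i, (i, j) ∈ stepE E f g := by
  obtain ⟨i, hi⟩ := h
  exact ⟨f i, mem_union_left _ (mem_image_of_mem (fun p => (f p.1, p.2)) hi)⟩

theorem meets_axes_of_mem_reachSet (hm : 0 < m) (hn : 0 < n) {k : ℕ}
    {E : Finset (Fin m × Fin n)} (h : E ∈ reachSet hm hn k) :
    (∃ j, (⟨0, hm⟩, j) ∈ E) ∧ ∃ i, (i, ⟨0, hn⟩) ∈ E := by
  induction k generalizing E with
  | zero =>
    rw [mem_singleton.1 h]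
    exact ⟨⟨_, mem_singleton_self _⟩, ⟨_, mem_singleton_self _⟩⟩
  | succ k ih =>
    rw [reachSet_succ, mem_stepImage] at h
    obtain ⟨E, hE, f, g, rfl⟩ := h
    exact ⟨stepE_meets_row (ih hE).1 f g, stepE_meets_col (ih hE).2 f g⟩

theorem card_reachSet_le (hm : 0 < m) (hn : 0 < n) (k : ℕ) :
    #(reachSet hm hn k) ≤
      2 ^ (m * n - 1) + 2 ^ ((m - 1) * (n - 1)) * (2 ^ (m - 1) - 1) * (2 ^ (n - 1) - 1) := by
  have hsub : reachSet hm hn k ⊆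
      ({E | (∃ j, (⟨0, hm⟩, j) ∈ E) ∧ ∃ i, (i, ⟨0, hn⟩) ∈ E} : Finset (Finset (Fin m × Fin n))) :=
    fun E hE => mem_filter.2 ⟨mem_univ E, meets_axes_of_mem_reachSet hm hn hE⟩
  have hcount := card_filter_exists_fst_and_exists_snd (⟨0, hm⟩ : Fin m) (⟨0, hn⟩ : Fin n)
  rw [Fintype.card_fin, Fintype.card_fin, ← two_pow_grid_identity hm hn] at hcount
  refine (card_le_card hsub).trans_eq ?_
  -- the two sides decide the filter predicate through different `Decidable` instances
  convert Nat.add_right_cancel (Nat.add_right_cancel hcount)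

end Reachability

theorem stmt16 (m n : ℕ) (hm : 0 < m) (hn : 0 < n) (E : Finset (Fin m × Fin n)) :
    Reach hm hn E ↔
      ∃ k ≤ 2 ^ (m * n - 1) +
          2 ^ ((m - 1) * (n - 1)) * (2 ^ (m - 1) - 1) * (2 ^ (n - 1) - 1),
        ∃ (L : Fin m → Finset ℕ) (P : Fin n → Finset ℕ),
          (L, P) ∈ Uset m n k ∧ sTab L P = E := by
  rw [reach_iff_exists_mem_reachSet hm hn]
  constructor
  · rintro ⟨k, hk⟩
    have hbounded := iterate_subset_iterate_of_card_le subset_stepImage _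
      (card_reachSet_le hm hn) k hk
    exact ⟨_, le_rfl, (mem_reachSet_iff hm hn _ E).1 hbounded⟩
  · rintro ⟨k, -, hk⟩
    exact ⟨k, (mem_reachSet_iff hm hn k E).2 hk⟩
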